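/- Let G be a connected finite simple graph on n ≥ 2 vertices and let X be a metric space with at least two points. If λ(G, X) = n/(n−1), then G is the complete graph on its n vertices (every pair of distinct vertices is adjacent). -/

import Mathlib

/-!
Test `λ(G, X)` on two-valued maps `f = a` on `S`, `f = b` off `S`: then
`R_f = vol(G) · e(S, Sᶜ) / (vol S · vol Sᶜ)`. For `S = {v}` this is `vol G / (vol G - deg v)`,
so `λ = n / (n - 1)` forces `n · deg v ≥ vol G` for every `v`, and summing over `v` shows that
`G` is `d`-regular. For `S` an edge it is `n (d - 1) / (d (n - 2))`, which is smaller than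
`n / (n - 1)` unless `d = n - 1`, i.e. unless `G` is complete.
-/

open scoped Classical
open Finset

/-- Degree of a vertex in a finite simple graph. -/
noncomputable def gdeg {V : Type*} [Fintype V] (G : SimpleGraph V) (v : V) : ℕ :=
  (G.neighborSet v).ncard

/-- The volume of a finite simple graph: the sum of the degrees of all vertices. -/
noncomputable def gvol {V : Type*} [Fintype V] (G : SimpleGraph V) : ℕ :=
  ∑ v, gdeg G v

/-- The Rayleigh-type quotient `R_f(G, X)` for an embedding `f : V(G) → X` where `X`
carries a distance function `d`.  The sum over ordered pairs of adjacent vertices divided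
by `2` is the sum over edges of `G`; the sum over ordered pairs of distinct vertices divided
by `2` is the sum over unordered pairs of distinct vertices of `G`. -/
noncomputable def Rf {V X : Type*} [Fintype V] (G : SimpleGraph V) (d : X → X → ℝ)
    (f : V → X) : ℝ :=
  ((gvol G : ℝ) * ((∑ u, ∑ v, if G.Adj u v then d (f u) (f v) ^ 2 else 0) / 2)) /
    ((∑ u, ∑ v, if u ≠ v then d (f u) (f v) ^ 2 * (gdeg G u : ℝ) * (gdeg G v : ℝ) else 0) / 2)

/-- `lam G d` is `λ(G, X)`: the infimum of `R_f(G, X)` over nonconstant `f : V(G) → X`. -/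
noncomputable def lam {V X : Type*} [Fintype V] (G : SimpleGraph V) (d : X → X → ℝ) : ℝ :=
  sInf {r | ∃ f : V → X, (∃ u v, f u ≠ f v) ∧ r = Rf G d f}

/-- The diameter of a finite simple graph: the maximum shortest-path distance over pairs. -/
noncomputable def gDiam {V : Type*} [Fintype V] (H : SimpleGraph V) : ℕ :=
  Finset.univ.sup fun p : V × V => H.dist p.1 p.2

/-- The maximum degree of a finite simple graph. -/
noncomputable def gMaxDeg {V : Type*} [Fintype V] (G : SimpleGraph V) : ℕ :=
  Finset.univ.sup (gdeg G)

/-- The minimum degree of a finite simple graph. -/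
noncomputable def gMinDeg {V : Type*} [Fintype V] (G : SimpleGraph V) : ℕ :=
  sInf (Set.range (gdeg G))

theorem Finset.sum_sum_eq_two_nsmul_sum_sum_compl {V M : Type*} [Fintype V] [DecidableEq V]
    [AddCommMonoid M] (S : Finset V) (F : V → V → M) (hsymm : ∀ u v, F u v = F v u)
    (hzero : ∀ u v, (u ∈ S ↔ v ∈ S) → F u v = 0) :
    ∑ u, ∑ v, F u v = 2 • ∑ u ∈ S, ∑ v ∈ Sᶜ, F u v := by
  have hS : ∀ u ∈ S, ∑ v, F u v = ∑ v ∈ Sᶜ, F u v := fun u hu => by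
    rw [← sum_add_sum_compl S, sum_eq_zero fun v hv => hzero u v (by simp [hu, hv]), zero_add]
  have hSc : ∀ u ∈ Sᶜ, ∑ v, F u v = ∑ v ∈ S, F u v := fun u hu => by
    rw [← sum_add_sum_compl S, sum_eq_zero (s := Sᶜ) fun v hv => hzero u v
      (by simp_all), add_zero]
  rw [← sum_add_sum_compl S, sum_congr rfl hS, sum_congr rfl hSc, sum_comm (s := Sᶜ), two_nsmul]
  simp only [hsymm _ (_ : V)]

lemma gdeg_eq_degree {V : Type*} [Fintype V] (G : SimpleGraph V) (v : V) :
    gdeg G v = G.degree v := by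
  rw [gdeg, Set.ncard_eq_toFinset_card']
  rfl

namespace SimpleGraph

variable {V : Type*} [Fintype V] (G : SimpleGraph V)

noncomputable def vol (S : Finset V) : ℝ := ∑ v ∈ S, (G.degree v : ℝ)

noncomputable def cutSize (S : Finset V) : ℝ :=
  ∑ u ∈ S, ∑ v ∈ Sᶜ, if G.Adj u v then 1 else 0

noncomputable def cutRatio (S : Finset V) : ℝ :=
  G.vol univ * G.cutSize S / (G.vol S * G.vol Sᶜ)

lemma gvol_eq_vol_univ : (gvol G : ℝ) = G.vol univ := by
  simp [gvol, vol, gdeg_eq_degree]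

lemma vol_compl (S : Finset V) : G.vol Sᶜ = G.vol univ - G.vol S := by
  rw [vol, vol, vol, ← sum_add_sum_compl S, add_sub_cancel_left]

lemma sum_adj_eq_degree (u : V) : ∑ v, (if G.Adj u v then (1 : ℝ) else 0) = G.degree u := by
  rw [sum_boole, ← card_neighborFinset_eq_degree, neighborFinset_eq_filter]

lemma cutSize_eq_vol_sub (S : Finset V) :
    G.cutSize S = G.vol S - ∑ u ∈ S, ∑ v ∈ S, if G.Adj u v then 1 else 0 := by
  rw [cutSize, vol, eq_sub_iff_add_eq, ← sum_add_distrib]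
  refine sum_congr rfl fun u _ => ?_
  rw [add_comm, sum_add_sum_compl, sum_adj_eq_degree]

end SimpleGraph

lemma Rf_nonneg {V X : Type*} [Fintype V] (G : SimpleGraph V) (d : X → X → ℝ) (f : V → X) :
    0 ≤ Rf G d f := by
  unfold Rf
  refine div_nonneg (mul_nonneg (Nat.cast_nonneg _) (div_nonneg ?_ zero_le_two))
    (div_nonneg ?_ zero_le_two) <;>
  exact sum_nonneg fun u _ => sum_nonneg fun v _ => by split_ifs <;> positivity

lemma lam_le_Rf {V X : Type*} [Fintype V] (G : SimpleGraph V) (d : X → X → ℝ) {f : V → X}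
    (hf : ∃ u v, f u ≠ f v) : lam G d ≤ Rf G d f :=
  csInf_le ⟨0, by rintro r ⟨g, -, rfl⟩; exact Rf_nonneg G d g⟩ ⟨f, hf, rfl⟩

theorem Rf_ite_mem_eq_cutRatio {V X : Type*} [Fintype V] [MetricSpace X] (G : SimpleGraph V)
    (S : Finset V) {a b : X} (hab : a ≠ b) :
    Rf G (fun x y : X => dist x y) (fun v => if v ∈ S then a else b) = G.cutRatio S := by
  set f : V → X := fun v => if v ∈ S then a else b
  have hconst : ∀ u v, (u ∈ S ↔ v ∈ S) → f u = f v := by intro u v h; simp [f, h]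
  have hcross : ∀ u ∈ S, ∀ v ∈ Sᶜ, dist (f u) (f v) = dist a b := by
    intro u hu v hv; simp [f, hu, mem_compl.1 hv]
  have hnum : (∑ u, ∑ v, if G.Adj u v then dist (f u) (f v) ^ 2 else 0) =
      2 * (dist a b ^ 2 * G.cutSize S) := by
    rw [sum_sum_eq_two_nsmul_sum_sum_compl S, nsmul_eq_mul, Nat.cast_ofNat]
    · rw [SimpleGraph.cutSize]
      congr 1
      rw [mul_sum]
      refine sum_congr rfl fun u hu => ?_
      rw [mul_sum]
      refine sum_congr rfl fun v hv => ?_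
      rw [hcross u hu v hv, mul_ite, mul_one, mul_zero]
    · intro u v; rw [G.adj_comm, dist_comm]
    · intro u v h; simp [hconst u v h]
  have hden :
      (∑ u, ∑ v, if u ≠ v then dist (f u) (f v) ^ 2 * (gdeg G u : ℝ) * gdeg G v else 0) =
        2 * (dist a b ^ 2 * (G.vol S * G.vol Sᶜ)) := by
    rw [sum_sum_eq_two_nsmul_sum_sum_compl S, nsmul_eq_mul, Nat.cast_ofNat]
    · rw [SimpleGraph.vol, SimpleGraph.vol, sum_mul_sum]
      congr 1
      rw [mul_sum]
      refine sum_congr rfl fun u hu => ?_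
      rw [mul_sum]
      refine sum_congr rfl fun v hv => ?_
      rw [if_pos (ne_of_mem_of_not_mem hu (mem_compl.1 hv)), hcross u hu v hv, gdeg_eq_degree,
        gdeg_eq_degree, mul_assoc]
    · intro u v; simp only [ne_comm (a := u), dist_comm (f u), mul_right_comm]
    · intro u v h; simp [hconst u v h]
  have hD : dist a b ^ 2 ≠ 0 := pow_ne_zero 2 (dist_ne_zero.2 hab)
  rw [Rf, hnum, hden, G.gvol_eq_vol_univ, SimpleGraph.cutRatio,
    mul_div_cancel_left₀ _ two_ne_zero, mul_div_cancel_left₀ _ two_ne_zero, mul_left_comm,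
    mul_div_mul_left _ _ hD]

theorem lam_le_cutRatio {V X : Type*} [Fintype V] [MetricSpace X] (G : SimpleGraph V)
    {S : Finset V} (hS : S.Nonempty) (hSc : Sᶜ.Nonempty) {a b : X} (hab : a ≠ b) :
    lam G (fun x y : X => dist x y) ≤ G.cutRatio S := by
  obtain ⟨u, hu⟩ := hS
  obtain ⟨v, hv⟩ := hSc
  rw [← Rf_ite_mem_eq_cutRatio G S hab]
  exact lam_le_Rf G _ ⟨u, v, by simpa [hu, mem_compl.1 hv] using hab⟩

namespace SimpleGraph

variable {V : Type*} [Fintype V] (G : SimpleGraph V)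

lemma cutRatio_singleton {u : V} (hu : G.degree u ≠ 0) :
    G.cutRatio {u} = G.vol univ / (G.vol univ - G.degree u) := by
  have hvol : G.vol {u} = G.degree u := sum_singleton _ _
  rw [cutRatio, cutSize_eq_vol_sub, vol_compl, hvol]
  simp only [sum_singleton, G.irrefl, if_false, sub_zero]
  rw [mul_comm (G.degree u : ℝ)]
  exact mul_div_mul_right _ _ (Nat.cast_ne_zero.2 hu)

lemma cutRatio_singleton_lt {u : V} (hu : 0 < G.degree u)
    (h : (Fintype.card V : ℝ) * G.degree u < G.vol univ) :
    G.cutRatio {u} < Fintype.card V / (Fintype.card V - 1) := by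
  obtain ⟨w, huw⟩ := (G.degree_pos_iff_exists_adj u).1 hu
  have hn : (1 : ℝ) < Fintype.card V :=
    Nat.one_lt_cast.2 (Fintype.one_lt_card_iff.2 ⟨u, w, huw.ne⟩)
  have hd : (0 : ℝ) < G.degree u := Nat.cast_pos.2 hu
  rw [cutRatio_singleton G hu.ne', div_lt_div_iff₀ (by nlinarith) (by linarith)]
  nlinarith

lemma cutRatio_pair {u w : V} {d : ℕ} (hreg : G.IsRegularOfDegree d) (huw : G.Adj u w) :
    G.cutRatio {u, w} =
      Fintype.card V * d * (2 * d - 2) / (2 * d * (Fintype.card V * d - 2 * d)) := by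
  have hvol : G.vol univ = Fintype.card V * d := by
    simp [vol, hreg.degree_eq]
  have hvolS : G.vol {u, w} = 2 * d := by
    rw [vol, sum_pair huw.ne, hreg.degree_eq, hreg.degree_eq, two_mul]
  rw [cutRatio, cutSize_eq_vol_sub, vol_compl, hvol, hvolS]
  simp [sum_pair huw.ne, huw, huw.symm]
  norm_num

lemma cutRatio_pair_lt {u w : V} {d : ℕ} (hreg : G.IsRegularOfDegree d) (huw : G.Adj u w)
    (hd : d + 2 ≤ Fintype.card V) :
    G.cutRatio {u, w} < Fintype.card V / (Fintype.card V - 1) := by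
  have hd1 : (1 : ℝ) ≤ d := Nat.one_le_cast.2 (hreg.degree_eq u ▸ huw.degree_pos_left)
  have hdn : (d : ℝ) + 2 ≤ Fintype.card V := by exact_mod_cast hd
  have hcompl : (0 : ℝ) < Fintype.card V * d - 2 * d := by nlinarith
  rw [cutRatio_pair G hreg huw, div_lt_div_iff₀ (by positivity) (by linarith)]
  have hn : (0 : ℝ) < Fintype.card V := by linarith
  have hd0 : (0 : ℝ) < d := by linarith
  -- after cross-multiplying, the two sides differ by `2 n d (n - 1 - d)`
  nlinarith [mul_pos (mul_pos hn hd0) (by linarith : (0 : ℝ) < Fintype.card V - 1 - d)]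

lemma isRegularOfDegree_of_vol_univ_le (h : ∀ v, G.vol univ ≤ Fintype.card V * G.degree v)
    (u : V) : G.IsRegularOfDegree (G.degree u) := by
  have hsum : ∑ _v : V, G.vol univ = ∑ v : V, (Fintype.card V : ℝ) * G.degree v := by
    rw [sum_const, card_univ, nsmul_eq_mul, ← mul_sum, vol]
  have hall := (sum_eq_sum_iff_of_le fun v _ => h v).1 hsum
  have hn : (0 : ℝ) < Fintype.card V := Nat.cast_pos.2 (Fintype.card_pos_iff.2 ⟨u⟩)
  intro v
  exact_mod_cast mul_left_cancel₀ hn.ne'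
    ((hall v (mem_univ v)).symm.trans (hall u (mem_univ u)))

end SimpleGraph

theorem stmt_5_general {V : Type*} [Fintype V] (G : SimpleGraph V)
    (hG : G.Connected)
    (X : Type*) [MetricSpace X] (hX : ∃ a b : X, a ≠ b)
    (hlam : lam G (fun x y : X => dist x y) = (Fintype.card V : ℝ) / ((Fintype.card V : ℝ) - 1)) :
    ∀ u v : V, u ≠ v → G.Adj u v := by
  intro u v huv
  have : Nontrivial V := ⟨u, v, huv⟩
  obtain ⟨a, b, hab⟩ := hX
  have hbound : ∀ S : Finset V, S.Nonempty → Sᶜ.Nonempty →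
      (Fintype.card V : ℝ) / (Fintype.card V - 1) ≤ G.cutRatio S :=
    fun S hS hSc => hlam ▸ lam_le_cutRatio G hS hSc hab
  have hdeg : ∀ x, 0 < G.degree x := fun x => hG.preconnected.degree_pos_of_nontrivial x
  have hvol : ∀ x, G.vol univ ≤ Fintype.card V * G.degree x := fun x => by
    obtain ⟨y, hy⟩ := exists_ne x
    refine not_lt.1 fun h => (G.cutRatio_singleton_lt (hdeg x) h).not_ge ?_
    exact hbound {x} (singleton_nonempty x) ⟨y, by simpa using hy⟩
  by_contra hnadj
  obtain ⟨w, huw⟩ := (G.degree_pos_iff_exists_adj u).1 (hdeg u)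
  have hvw : v ≠ w := by rintro rfl; exact hnadj huw
  have hd : G.degree u + 2 ≤ Fintype.card V := by
    have := (G.degree_lt_card_sub_one u).2 fun h => hnadj (h huv)
    omega
  refine (G.cutRatio_pair_lt (G.isRegularOfDegree_of_vol_univ_le hvol u) huw hd).not_ge ?_
  exact hbound {u, w} (insert_nonempty u {w}) ⟨v, by simp [huv.symm, hvw]⟩

/-- For a connected finite simple graph `G` on `n ≥ 2` vertices and a metric
space `X` with at least two points, if `λ(G, X) = n / (n - 1)` then `G` is complete. -/
theorem stmt_5 {V : Type*} [Fintype V] (G : SimpleGraph V)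
    (hG : G.Connected) (hV : 2 ≤ Fintype.card V)
    (X : Type*) [MetricSpace X] (hX : ∃ a b : X, a ≠ b)
    (hlam : lam G (fun x y : X => dist x y) = (Fintype.card V : ℝ) / ((Fintype.card V : ℝ) - 1)) :
    ∀ u v : V, u ≠ v → G.Adj u v :=
  stmt_5_general G hG X hX hlam
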